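/- arXiv:math/0612583 — 8 statements merged into one kernel-verified Lean document; each statement's English description precedes it below -/
import Mathlib

section
/- Let z ∈ ℝ^K have z_i > 0 for every i. Then Σ_{i=1}^K z_i · φ_i(z) · exp(−Σ_{j∈V_i} φ_j(z)) ≥ (e^{−1}/V) · Σ_{k=1}^K z_k. -/
open Finset

/-- The closed neighbourhood `V_i = {i} ∪ {j : (i,j) ∈ E}` of a vertex `i`. -/
def closedNbhd {K : ℕ} (G : SimpleGraph (Fin K)) [DecidableRel G.Adj] (i : Fin K) :
    Finset (Fin K) :=
  insert i (G.neighborFinset i)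

/-- `φ_i(x) = x_i / ∑_{j ∈ V_i} x_j`. -/
noncomputable def phi {K : ℕ} (G : SimpleGraph (Fin K)) [DecidableRel G.Adj]
    (x : Fin K → ℝ) (i : Fin K) : ℝ :=
  x i / ∑ j ∈ closedNbhd G i, x j

lemma closedNbhd_symm {K : ℕ} (G : SimpleGraph (Fin K)) [DecidableRel G.Adj] (i j : Fin K) :
    j ∈ closedNbhd G i ↔ i ∈ closedNbhd G j := by
  simp only [closedNbhd, Finset.mem_insert, SimpleGraph.mem_neighborFinset]
  constructor
  · rintro (h | h)
    · exact Or.inl h.symm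
    · exact Or.inr h.symm
  · rintro (h | h)
    · exact Or.inl h.symm
    · exact Or.inr h.symm

/-- If `z_i > 0` for all `i`, then
`∑_i z_i φ_i(z) exp(−∑_{j∈V_i} φ_j(z)) ≥ (e⁻¹/V) ∑_k z_k`. -/
theorem stmt0 {K V : ℕ} (G : SimpleGraph (Fin K)) [DecidableRel G.Adj]
    (hreg : ∀ i, (closedNbhd G i).card = V)
    (z : Fin K → ℝ) (hz : ∀ i, 0 < z i) :
    (Real.exp (-1) / V) * ∑ k, z k ≤
      ∑ i, z i * phi G z i * Real.exp (-∑ j ∈ closedNbhd G i, phi G z j) := by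
  rcases Nat.eq_zero_or_pos K with hK | hK
  · subst hK
    simp
  set T : Fin K → ℝ := fun i => ∑ j ∈ closedNbhd G i, phi G z j with hT
  set s : Fin K → ℝ := fun i => ∑ j ∈ closedNbhd G i, z j with hs
  set C : ℝ := ∑ k, z k with hC
  have hmem : ∀ i, i ∈ closedNbhd G i := fun i => Finset.mem_insert_self _ _
  have hspos : ∀ i, 0 < s i := fun i => Finset.sum_pos (fun j _ => hz j) ⟨i, hmem i⟩
  have hCpos : 0 < C := Finset.sum_pos (fun j _ => hz j) ⟨⟨0, hK⟩, Finset.mem_univ _⟩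
  have hVpos : 0 < V := by
    have h := hreg ⟨0, hK⟩
    have hcard : 0 < (closedNbhd G ⟨0, hK⟩).card := Finset.card_pos.mpr ⟨_, hmem _⟩
    omega
  have hVC : (0:ℝ) < (V:ℝ) * C := mul_pos (by exact_mod_cast hVpos) hCpos
  -- swap lemma
  have hswap : ∀ f : Fin K → Fin K → ℝ,
      ∑ i, ∑ j ∈ closedNbhd G i, f i j = ∑ j, ∑ i ∈ closedNbhd G j, f i j := by
    intro f
    exact Finset.sum_comm' (fun i j => by
      simp only [Finset.mem_univ, true_and, and_true]
      exact closedNbhd_symm G i j)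
  -- identity 1 : ∑ s = V * C
  have h1 : ∑ i, s i = (V:ℝ) * C := by
    calc ∑ i, s i = ∑ i, ∑ j ∈ closedNbhd G i, z j := rfl
      _ = ∑ j, ∑ _i ∈ closedNbhd G j, z j := hswap _
      _ = ∑ j, ((closedNbhd G j).card : ℝ) * z j := by
          simp [Finset.sum_const, nsmul_eq_mul]
      _ = ∑ j, (V : ℝ) * z j := by
          refine Finset.sum_congr rfl fun j _ => ?_
          rw [hreg j]
      _ = (V : ℝ) * C := by rw [hC, Finset.mul_sum]
  -- φ_j * s_j = z_j
  have hphi : ∀ j, phi G z j * s j = z j := by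
    intro j
    show z j / s j * s j = z j
    exact div_mul_cancel₀ _ (hspos j).ne'
  -- identity 2 : ∑ z i * T i = C
  have h2 : ∑ i, z i * T i = C := by
    calc ∑ i, z i * T i = ∑ i, ∑ j ∈ closedNbhd G i, z i * phi G z j := by
          refine Finset.sum_congr rfl fun i _ => ?_
          rw [hT, Finset.mul_sum]
      _ = ∑ j, ∑ i ∈ closedNbhd G j, z i * phi G z j := hswap _
      _ = ∑ j, phi G z j * s j := by
          refine Finset.sum_congr rfl fun j _ => ?_
          calc ∑ i ∈ closedNbhd G j, z i * phi G z j
              = ∑ i ∈ closedNbhd G j, phi G z j * z i :=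
                Finset.sum_congr rfl fun i _ => by ring
            _ = phi G z j * ∑ i ∈ closedNbhd G j, z i := (Finset.mul_sum _ _ _).symm
            _ = phi G z j * s j := rfl
      _ = ∑ j, z j := Finset.sum_congr rfl fun j _ => hphi j
      _ = C := rfl
  -- step A : tangent-line bound  ∑ z_i e^{-T_i/2} ≥ e^{-1/2} C
  have hA : Real.exp (-(1:ℝ)/2) * C ≤ ∑ i, z i * Real.exp (-T i / 2) := by
    have hpt : ∀ i, Real.exp (-(1:ℝ)/2) / 2 * (3 * z i) -
        Real.exp (-(1:ℝ)/2) / 2 * (z i * T i) ≤ z i * Real.exp (-T i / 2) := by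
      intro i
      have h3 : Real.exp (-T i / 2) = Real.exp (-(1:ℝ)/2) * Real.exp ((1 - T i) / 2) := by
        rw [← Real.exp_add]; ring_nf
      have h4 : 1 + (1 - T i) / 2 ≤ Real.exp ((1 - T i) / 2) := by
        linarith [Real.add_one_le_exp ((1 - T i) / 2)]
      have h5 : Real.exp (-(1:ℝ)/2) * (1 + (1 - T i) / 2) ≤
          Real.exp (-(1:ℝ)/2) * Real.exp ((1 - T i) / 2) :=
        mul_le_mul_of_nonneg_left h4 (Real.exp_pos _).le
      have h6 : z i * (Real.exp (-(1:ℝ)/2) * (1 + (1 - T i) / 2)) ≤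
          z i * Real.exp (-T i / 2) := by
        rw [h3]; exact mul_le_mul_of_nonneg_left h5 (hz i).le
      calc Real.exp (-(1:ℝ)/2) / 2 * (3 * z i) -
            Real.exp (-(1:ℝ)/2) / 2 * (z i * T i)
          = z i * (Real.exp (-(1:ℝ)/2) * (1 + (1 - T i) / 2)) := by ring
        _ ≤ z i * Real.exp (-T i / 2) := h6
    calc Real.exp (-(1:ℝ)/2) * C
        = Real.exp (-(1:ℝ)/2) / 2 * (3 * C) - Real.exp (-(1:ℝ)/2) / 2 * C := by ring
      _ = ∑ i, (Real.exp (-(1:ℝ)/2) / 2 * (3 * z i) -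
            Real.exp (-(1:ℝ)/2) / 2 * (z i * T i)) := by
          have e1 : ∑ i, (Real.exp (-(1:ℝ)/2) / 2 * (3 * z i)) =
              Real.exp (-(1:ℝ)/2) / 2 * (3 * C) := by
            rw [← Finset.mul_sum, ← Finset.mul_sum, ← hC]
          have e2 : ∑ i, (Real.exp (-(1:ℝ)/2) / 2 * (z i * T i)) =
              Real.exp (-(1:ℝ)/2) / 2 * C := by
            rw [← Finset.mul_sum, h2]
          rw [Finset.sum_sub_distrib, e1, e2]
      _ ≤ ∑ i, z i * Real.exp (-T i / 2) := Finset.sum_le_sum fun i _ => hpt i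
  -- step B : Cauchy–Schwarz (Sedrakyan / Engel form)
  have hB : (∑ i, z i * Real.exp (-T i / 2)) ^ 2 / ((V:ℝ) * C) ≤
      ∑ i, z i * phi G z i * Real.exp (-T i) := by
    have hsed := Finset.sq_sum_div_le_sum_sq_div (Finset.univ : Finset (Fin K))
      (fun i => z i * Real.exp (-T i / 2)) (g := s) (fun i _ => hspos i)
    rw [h1] at hsed
    refine hsed.trans_eq (Finset.sum_congr rfl fun i _ => ?_)
    have hexp : Real.exp (-T i / 2) ^ 2 = Real.exp (-T i) := by
      rw [sq, ← Real.exp_add]; ring_nf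
    have hnum : (z i * Real.exp (-T i / 2)) ^ 2 = z i * z i * Real.exp (-T i) := by
      rw [mul_pow, hexp]; ring
    have hsi : s i = ∑ l ∈ closedNbhd G i, z l := rfl
    rw [hnum, phi, ← hsi]
    field_simp
  -- conclude
  have hApos : 0 ≤ Real.exp (-(1:ℝ)/2) * C := le_of_lt (mul_pos (Real.exp_pos _) hCpos)
  have hsq : (Real.exp (-(1:ℝ)/2) * C) ^ 2 ≤ (∑ i, z i * Real.exp (-T i / 2)) ^ 2 :=
    pow_le_pow_left₀ hApos hA 2
  have hexp1 : Real.exp (-(1:ℝ)/2) ^ 2 = Real.exp (-1) := by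
    rw [sq, ← Real.exp_add]; norm_num
  have hrw : (Real.exp (-(1:ℝ)/2) * C) ^ 2 / ((V:ℝ) * C) = Real.exp (-1) / (V:ℝ) * C := by
    rw [mul_pow, hexp1]
    field_simp
  calc Real.exp (-1) / (V:ℝ) * C
      = (Real.exp (-(1:ℝ)/2) * C) ^ 2 / ((V:ℝ) * C) := hrw.symm
    _ ≤ (∑ i, z i * Real.exp (-T i / 2)) ^ 2 / ((V:ℝ) * C) := by gcongr
    _ ≤ ∑ i, z i * phi G z i * Real.exp (-T i) := hB
    _ = ∑ i, z i * phi G z i * Real.exp (-∑ j ∈ closedNbhd G i, phi G z j) := by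
        simp only [hT]
end

section
/- Fix t and λ ∈ ℝ. Suppose z is an ℝ^K-valued function of a real variable such that z_i(t) > 0 for all i, and each coordinate z_i is differentiable at t with derivative z_i'(t) = λ − φ_i(z(t))·exp(−Σ_{j∈V_i} φ_j(z(t))). Then the function s ↦ Σ_{i=1}^K z_i(s)² is differentiable at t and its derivative at t is at most 2(λ − e^{−1}/V) · Σ_{i=1}^K z_i(t); in particular, if λ ≤ e^{−1}/V, the derivative is at most (λ − e^{−1}/V) · Σ_{i=1}^K z_i(t). -/
open Finset

/-! Writing `D_i = ∑_{j∈V_i} x_j` and `S_i = ∑_{j∈V_i} φ_j`, double counting over the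
symmetric relation `j ∈ V_i` gives `∑ D_i = V ∑ x_i` and `∑ x_i S_i = ∑ x_i`. The tangent
line of `exp` at `-1/2` then yields `∑ x_i e^{-S_i/2} ≥ e^{-1/2} ∑ x_i`, and Cauchy–Schwarz
in Engel form bounds `∑ x_i φ_i e^{-S_i} = ∑ (x_i e^{-S_i/2})² / D_i` from below by
`(∑ x_i e^{-S_i/2})² / ∑ D_i ≥ e^{-1} (∑ x_i) / V`. Hence `d/dt ∑ z_i² = 2 ∑ z_i z_i'`
is at most `2 (λ - e^{-1}/V) ∑ z_i`. -/

section ClosedNbhd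

variable {K : ℕ} (G : SimpleGraph (Fin K)) [DecidableRel G.Adj]

lemma mem_closedNbhd_comm {i j : Fin K} : j ∈ closedNbhd G i ↔ i ∈ closedNbhd G j := by
  simp [closedNbhd, eq_comm, G.adj_comm]

lemma sum_sum_closedNbhd_comm {M : Type*} [AddCommMonoid M] (f : Fin K → Fin K → M) :
    ∑ i, ∑ j ∈ closedNbhd G i, f i j = ∑ j, ∑ i ∈ closedNbhd G j, f i j :=
  Finset.sum_comm' fun i j => by simp [mem_closedNbhd_comm G (i := i) (j := j)]

lemma sum_sum_closedNbhd_of_card_eq {M : Type*} [AddCommMonoid M] {V : ℕ}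
    (hreg : ∀ i, (closedNbhd G i).card = V) (x : Fin K → M) :
    ∑ i, ∑ j ∈ closedNbhd G i, x j = V • ∑ i, x i := by
  rw [sum_sum_closedNbhd_comm G fun _ j => x j, Finset.smul_sum]
  simp [hreg]

lemma sum_closedNbhd_pos {x : Fin K → ℝ} (hx : ∀ i, 0 < x i) (i : Fin K) :
    0 < ∑ j ∈ closedNbhd G i, x j :=
  Finset.sum_pos (fun j _ => hx j) ⟨i, Finset.mem_insert_self i _⟩

lemma sum_mul_sum_phi {x : Fin K → ℝ} (hx : ∀ i, 0 < x i) :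
    ∑ i, x i * ∑ j ∈ closedNbhd G i, phi G x j = ∑ i, x i := by
  simp_rw [Finset.mul_sum]
  rw [sum_sum_closedNbhd_comm G fun i j => x i * phi G x j]
  refine Finset.sum_congr rfl fun j _ => ?_
  rw [← Finset.sum_mul, phi, mul_div_cancel₀ _ (sum_closedNbhd_pos G hx j).ne']

end ClosedNbhd

lemma exp_mul_sum_le_sum_mul_exp {ι : Type*} (s : Finset ι) {w a : ι → ℝ}
    (hw : ∀ i ∈ s, 0 ≤ w i) {c : ℝ} (hc : ∑ i ∈ s, w i * a i = c * ∑ i ∈ s, w i) :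
    Real.exp c * ∑ i ∈ s, w i ≤ ∑ i ∈ s, w i * Real.exp (a i) := by
  have htangent : ∀ i ∈ s, w i * (Real.exp c * (1 + (a i - c))) ≤ w i * Real.exp (a i) :=
    fun i hi => by
      refine mul_le_mul_of_nonneg_left ?_ (hw i hi)
      have := Real.add_one_le_exp (a i - c)
      rw [Real.exp_sub, le_div_iff₀ (Real.exp_pos c)] at this
      linarith
  calc Real.exp c * ∑ i ∈ s, w i
      = ∑ i ∈ s, w i * (Real.exp c * (1 + (a i - c))) := by
        simp only [mul_left_comm (w _), ← Finset.mul_sum, mul_add, mul_sub, mul_one,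
          Finset.sum_add_distrib, Finset.sum_sub_distrib, hc, ← Finset.sum_mul]
        ring
    _ ≤ ∑ i ∈ s, w i * Real.exp (a i) := Finset.sum_le_sum htangent

lemma exp_neg_one_div_mul_sum_le {K V : ℕ} (G : SimpleGraph (Fin K)) [DecidableRel G.Adj]
    (hreg : ∀ i, (closedNbhd G i).card = V) {x : Fin K → ℝ} (hx : ∀ i, 0 < x i) :
    Real.exp (-1) / V * ∑ i, x i ≤
      ∑ i, x i * (phi G x i * Real.exp (-∑ j ∈ closedNbhd G i, phi G x j)) := by
  set S : Fin K → ℝ := fun i => ∑ j ∈ closedNbhd G i, phi G x j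
  set X := ∑ i, x i
  have hX : 0 ≤ X := Finset.sum_nonneg fun i _ => (hx i).le
  have hexp : Real.exp (-1 / 2) * X ≤ ∑ i, x i * Real.exp (-S i / 2) := by
    refine exp_mul_sum_le_sum_mul_exp _ (fun i _ => (hx i).le) ?_
    simp_rw [mul_div_assoc', mul_neg, ← Finset.sum_div, Finset.sum_neg_distrib]
    rw [sum_mul_sum_phi G hx]
    ring
  have hcs := Finset.sq_sum_div_le_sum_sq_div univ (fun i => x i * Real.exp (-S i / 2))
    fun i _ => sum_closedNbhd_pos G hx i
  have hsq : ∀ i, (x i * Real.exp (-S i / 2)) ^ 2 / ∑ j ∈ closedNbhd G i, x j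
      = x i * (phi G x i * Real.exp (-S i)) := fun i => by
    rw [mul_pow, ← Real.exp_nat_mul, phi]
    field_simp
    ring_nf
  simp only [hsq, sum_sum_closedNbhd_of_card_eq G hreg, nsmul_eq_mul] at hcs
  have hsq_div : Real.exp (-1) / V * X = (Real.exp (-1 / 2) * X) ^ 2 / (V * X) := by
    rcases hX.eq_or_lt with hX0 | hXpos
    · simp [← hX0]
    rw [mul_pow, ← Real.exp_nat_mul]
    field_simp
    norm_num
  calc Real.exp (-1) / V * X
      = (Real.exp (-1 / 2) * X) ^ 2 / (V * X) := hsq_div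
    _ ≤ (∑ i, x i * Real.exp (-S i / 2)) ^ 2 / (V * X) := by gcongr
    _ ≤ _ := hcs

/-- If at time `t` all coordinates of `z` are positive and each coordinate `z_i` is
differentiable at `t` with derivative `λ − φ_i(z(t)) exp(−∑_{j∈V_i} φ_j(z(t)))`, then
`s ↦ ∑_i z_i(s)²` is differentiable at `t` with derivative at most
`2(λ − e⁻¹/V) ∑_i z_i(t)`; in particular, if `λ ≤ e⁻¹/V`, the derivative is at most
`(λ − e⁻¹/V) ∑_i z_i(t)`. -/
theorem stmt1 {K V : ℕ} (G : SimpleGraph (Fin K)) [DecidableRel G.Adj]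
    (hreg : ∀ i, (closedNbhd G i).card = V)
    (lam t : ℝ) (z : ℝ → Fin K → ℝ)
    (hpos : ∀ i, 0 < z t i)
    (hderiv : ∀ i, HasDerivAt (fun s => z s i)
      (lam - phi G (z t) i * Real.exp (-∑ j ∈ closedNbhd G i, phi G (z t) j)) t) :
    ∃ d : ℝ, HasDerivAt (fun s => ∑ i, (z s i) ^ 2) d t ∧
      d ≤ 2 * (lam - Real.exp (-1) / V) * ∑ i, z t i ∧
      (lam ≤ Real.exp (-1) / V → d ≤ (lam - Real.exp (-1) / V) * ∑ i, z t i) := by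
  set X := ∑ i, z t i
  set Q := ∑ i, z t i * (phi G (z t) i * Real.exp (-∑ j ∈ closedNbhd G i, phi G (z t) j))
  have hd : HasDerivAt (fun s => ∑ i, z s i ^ 2) (2 * lam * X - 2 * Q) t := by
    refine (HasDerivAt.fun_sum fun i (_ : i ∈ univ) => (hderiv i).pow 2).congr_deriv ?_
    simp only [X, Q, Finset.mul_sum, ← Finset.sum_sub_distrib]
    exact Finset.sum_congr rfl fun i _ => by ring
  have hQ : Real.exp (-1) / V * X ≤ Q := exp_neg_one_div_mul_sum_le G hreg hpos
  have hX : 0 ≤ X := Finset.sum_nonneg fun i _ => (hpos i).le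
  refine ⟨_, hd, by linarith, fun hlam => ?_⟩
  linarith [mul_nonpos_of_nonpos_of_nonneg (sub_nonpos.mpr hlam) hX]
end

section
/- There exist constants b > 0 and ε₀ > 0 (depending only on 𝒢 and λ_1,…,λ_K) such that for every ε ∈ (0,ε₀) and every z having the fluid-limit properties with Σ_{i=1}^K z_i(0) = 1, one has min_i z_i(t) ≥ b·ε for every t ∈ [c·ε, τ_{1−ε}), where c = 1/(K(1−λ_*)). -/
open Finset

/-- `z : [0,∞) → ℝ^K` has the fluid-limit properties: it is continuous, has nonnegative
coordinates, each coordinate increment satisfies `z_i(t) − z_i(s) ≥ (λ_* − 1)(t − s)`, and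
whenever `∑_{j∈V_i} z_j(t) > 0`, the coordinate `z_i` is differentiable at `t` (from the
right at `t = 0`) with derivative `λ_i − φ_i(z(t)) exp(−∑_{j∈V_i} φ_j(z(t)))`. -/
def IsFluidLimit {K : ℕ} (G : SimpleGraph (Fin K)) [DecidableRel G.Adj]
    (lam : Fin K → ℝ) (lamStar : ℝ) (z : ℝ → Fin K → ℝ) : Prop :=
  ContinuousOn (fun t => z t) (Set.Ici 0) ∧
  (∀ i, ∀ t, 0 ≤ t → 0 ≤ z t i) ∧
  (∀ i, ∀ s t : ℝ, 0 ≤ s → s ≤ t → (lamStar - 1) * (t - s) ≤ z t i - z s i) ∧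
  (∀ i, ∀ t, 0 ≤ t → 0 < ∑ j ∈ closedNbhd G i, z t j →
    HasDerivWithinAt (fun s => z s i)
      (lam i - phi G (z t) i * Real.exp (-∑ j ∈ closedNbhd G i, phi G (z t) j))
      (Set.Ici 0) t)

/-- `τ_h = inf {t ≥ 0 : ∑_i z_i(t) < h}`, as an extended real (`⊤` if no such `t`). -/
noncomputable def tau {K : ℕ} (z : ℝ → Fin K → ℝ) (h : ℝ) : EReal :=
  sInf ((fun t : ℝ => (t : EReal)) '' {t : ℝ | 0 ≤ t ∧ ∑ i, z t i < h})

/-- If `f` grows at rate at least `m` on `(a,b)`, then `f b ≥ f a + m (b - a)`. -/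
lemma grow_on {f : ℝ → ℝ} {a b m : ℝ} (hab : a ≤ b) (ha : 0 ≤ a)
    (hcont : ContinuousOn f (Set.Icc a b))
    (hd : ∀ x ∈ Set.Ioo a b, ∃ d, m ≤ d ∧ HasDerivWithinAt f d (Set.Ici 0) x) :
    f a + m * (b - a) ≤ f b := by
  set g : ℝ → ℝ := fun x => f x - m * x with hg
  have key : ∀ x ∈ Set.Ioo a b, ∃ d', 0 ≤ d' ∧ HasDerivAt g d' x := by
    intro x hx
    obtain ⟨d, hmd, hder⟩ := hd x hx
    have hx0 : Set.Ici (0:ℝ) ∈ nhds x := Ici_mem_nhds (lt_of_le_of_lt ha hx.1)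
    have hfd : HasDerivAt f d x := hder.hasDerivAt hx0
    exact ⟨d - m, by linarith, hfd.sub ((hasDerivAt_id x).const_mul m |>.congr_deriv (by ring))⟩
  have hmono : MonotoneOn g (Set.Icc a b) := by
    apply monotoneOn_of_deriv_nonneg (convex_Icc a b)
    · exact hcont.sub ((continuous_const.mul continuous_id).continuousOn)
    · rw [interior_Icc]
      intro x hx
      obtain ⟨d', _, hder⟩ := key x hx
      exact hder.differentiableAt.differentiableWithinAt
    · rw [interior_Icc]
      intro x hx
      obtain ⟨d', hd', hder⟩ := key x hx
      rw [hder.deriv]; exact hd'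
  have := hmono (Set.left_mem_Icc.2 hab) (Set.right_mem_Icc.2 hab) hab
  simp only [hg] at this
  linarith

lemma growth {f : ℝ → ℝ} {a b m M : ℝ} (hab : a ≤ b) (ha : 0 ≤ a) (hm : 0 < m)
    (hcont : ContinuousOn f (Set.Icc a b))
    (hderiv : ∀ x ∈ Set.Icc a b, f x < M → ∃ d, m ≤ d ∧ HasDerivWithinAt f d (Set.Ici 0) x) :
    min M (f a + m * (b - a)) ≤ f b := by
  by_cases hMb : M ≤ f b
  · exact le_trans (min_le_left _ _) hMb
  push_neg at hMb
  set A : Set ℝ := Set.Icc a b ∩ f ⁻¹' Set.Ici M with hA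
  have hAclosed : IsClosed A :=
    hcont.preimage_isClosed_of_isClosed isClosed_Icc isClosed_Ici
  by_cases hAne : A.Nonempty
  · exfalso
    have hAcomp : IsCompact A := (isCompact_Icc).of_isClosed_subset hAclosed Set.inter_subset_left
    set r := sSup A with hrdef
    have hr : r ∈ A := hAcomp.sSup_mem hAne
    have hfr : M ≤ f r := hr.2
    have hrb : r ≤ b := hr.1.2
    have hrltb : r < b := by
      rcases lt_or_eq_of_le hrb with h | h
      · exact h
      · exact absurd (h ▸ hfr) (not_le.2 hMb)
    have hgrow : f r + m * (b - r) ≤ f b := by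
      apply grow_on (le_of_lt hrltb) (le_trans ha hr.1.1)
        (hcont.mono (Set.Icc_subset_Icc hr.1.1 le_rfl))
      intro x hx
      have hxI : x ∈ Set.Icc a b := ⟨le_trans hr.1.1 hx.1.le, hx.2.le⟩
      apply hderiv x hxI
      by_contra hfx
      push_neg at hfx
      have : x ∈ A := ⟨hxI, hfx⟩
      exact absurd (le_csSup hAcomp.bddAbove this) (not_le.2 hx.1)
    have : M < f b := by nlinarith [hfr, mul_pos hm (sub_pos.2 hrltb)]
    linarith
  · -- f < M on all of [a,b]
    have hall : ∀ x ∈ Set.Icc a b, f x < M := by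
      intro x hx
      by_contra hfx
      exact hAne ⟨x, hx, not_lt.1 hfx⟩
    have := grow_on hab ha hcont (fun x hx => hderiv x (Set.Ioo_subset_Icc_self hx) (hall x (Set.Ioo_subset_Icc_self hx)))
    exact le_trans (min_le_right _ _) this

set_option maxHeartbeats 2000000 in
/-- There exist `b > 0` and `ε₀ > 0` such that for any `ε ∈ (0,ε₀)` and any fluid limit `z`
with `∑_i z_i(0) = 1`, one has `min_i z_i(t) ≥ bε` for all `t ∈ [cε, τ_{1−ε})`, where
`c = 1/(K(1−λ_*))`. -/
theorem stmt3 {K : ℕ} (G : SimpleGraph (Fin K)) [DecidableRel G.Adj]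
    (hconn : G.Connected) (lam : Fin K → ℝ) (hlam : ∀ i, 0 < lam i)
    (lamStar : ℝ) (hstar : IsLeast (Set.range lam) lamStar) (hstar1 : lamStar < 1) :
    ∃ b : ℝ, 0 < b ∧ ∃ ε₀ : ℝ, 0 < ε₀ ∧ ∀ ε : ℝ, 0 < ε → ε < ε₀ →
      ∀ z : ℝ → Fin K → ℝ, IsFluidLimit G lam lamStar z → (∑ i, z 0 i) = 1 →
        ∀ t : ℝ, (1 / (K * (1 - lamStar))) * ε ≤ t → (t : EReal) < tau z (1 - ε) →
          ∀ i, b * ε ≤ z t i := by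
  obtain ⟨i₀, hi₀⟩ := hstar.1
  have hlspos : 0 < lamStar := hi₀ ▸ hlam i₀
  have hKne : Nonempty (Fin K) := hconn.nonempty
  have hK : 0 < K := Fin.pos hKne.some
  have hKR : (0:ℝ) < K := by exact_mod_cast hK
  have h1ls : (0:ℝ) < 1 - lamStar := by linarith
  set c : ℝ := 1 / (↑K * (1 - lamStar)) with hc
  have hcpos : 0 < c := by rw [hc]; positivity
  refine ⟨(lamStar/2)^K * c / K, by positivity, min (1/4) (1/(2*c)), by positivity, ?_⟩
  intro ε hε hεlt z hz hz0 t ht htau i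
  obtain ⟨hzcont, hznn, hzinc, hzder⟩ := hz
  have hε4 : ε < 1/4 := lt_of_lt_of_le hεlt (min_le_left _ _)
  have hεc : c * ε ≤ 1/2 := by
    have h2 : ε < 1/(2*c) := lt_of_lt_of_le hεlt (min_le_right _ _)
    rw [lt_div_iff₀ (by positivity)] at h2
    nlinarith
  set δ : ℝ := c * ε / K with hδ
  have hδpos : 0 < δ := by rw [hδ]; positivity
  have hKδ : (K:ℝ) * δ = c * ε := by rw [hδ]; field_simp
  set s₀ : ℝ := t - K * δ with hs₀
  have hs₀0 : 0 ≤ s₀ := by rw [hs₀, hKδ]; linarith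
  have hs₀t : s₀ ≤ t := by rw [hs₀]; nlinarith
  -- sum lower bound before tau
  have hsum : ∀ s, 0 ≤ s → s ≤ t → 1 - ε ≤ ∑ j, z s j := by
    intro s hs hst
    by_contra hlt
    push_neg at hlt
    have h1 : tau z (1-ε) ≤ (s:EReal) := sInf_le ⟨s, ⟨hs, hlt⟩, rfl⟩
    exact absurd htau (not_lt.2 (h1.trans (EReal.coe_le_coe_iff.2 hst)))
  -- big vertex at s₀
  obtain ⟨v, hv⟩ : ∃ v, (1 - ε)/K ≤ z s₀ v := by
    by_contra hcon
    push_neg at hcon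
    have hlt : ∑ j, z s₀ j < ∑ _j : Fin K, (1-ε)/K :=
      Finset.sum_lt_sum_of_nonempty Finset.univ_nonempty (fun j _ => hcon j)
    rw [Finset.sum_const, Finset.card_univ, Fintype.card_fin, nsmul_eq_mul] at hlt
    have heq : (K:ℝ) * ((1-ε)/K) = 1 - ε := by field_simp
    rw [heq] at hlt
    exact absurd (hsum s₀ hs₀0 hs₀t) (not_le.2 hlt)
  -- v stays large on [s₀, t]
  have hvlow : ∀ s, s₀ ≤ s → s ≤ t → δ ≤ z s v := by
    intro s hs hst
    have hinc := hzinc v s₀ s hs₀0 hs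
    have hss : s - s₀ ≤ K * δ := by rw [hs₀]; linarith
    have h1 : (lamStar - 1) * (K * δ) ≤ (lamStar - 1) * (s - s₀) :=
      mul_le_mul_of_nonpos_left hss (by linarith)
    have h2 : (1 - lamStar) * (K * δ) = ε / K := by
      rw [hKδ, hc]; field_simp
    have hδK : δ ≤ 1/(2*K) := by
      rw [hδ, div_le_div_iff₀ hKR (by positivity)]; nlinarith
    have hεK : ε / K ≤ 1 / (4*K) := by
      rw [div_le_div_iff₀ hKR (by positivity)]; nlinarith
    have h14 : 1/(2*(K:ℝ)) ≤ (1 - ε)/K - ε/K := by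
      rw [div_sub_div_same, div_le_div_iff₀ (by positivity) hKR]; nlinarith
    linarith [h1, h2, hδK, h14, hinc, hv]
  -- nonnegativity of phi
  have hφnn : ∀ s, 0 ≤ s → ∀ j, 0 ≤ phi G (z s) j := by
    intro s hs j
    unfold phi
    exact div_nonneg (hznn j s hs) (Finset.sum_nonneg fun k _ => hznn k s hs)
  have hzc : ContinuousOn (fun r => z r i) (Set.Ici 0) := by
    exact (continuous_apply i).comp_continuousOn hzcont
  have hls2 : (0:ℝ) < lamStar/2 := by linarith
  have hls21 : lamStar/2 ≤ 1 := by linarith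
  -- main propagation claim
  have claim : ∀ n : ℕ, ∀ (i' : Fin K) (w : G.Walk i' v), w.length ≤ n →
      ∀ s, s₀ + (n:ℝ) * δ ≤ s → s ≤ t → (lamStar/2)^n * δ ≤ z s i' := by
    intro n
    induction n with
    | zero =>
      intro i' w hw s hs1 hs2
      have hnil : w.Nil := SimpleGraph.Walk.nil_iff_length_eq.2 (Nat.le_zero.1 hw)
      have hiv : i' = v := hnil.eq
      subst hiv
      simp only [pow_zero, one_mul]
      exact hvlow s (by simpa using hs1) hs2
    | succ n ih =>
      intro i' w hw s hs1 hs2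
      have hη : (lamStar/2)^(n+1) ≤ 1 := pow_le_one₀ (le_of_lt hls2) hls21
      have hηn : (lamStar/2)^n ≤ 1 := pow_le_one₀ (le_of_lt hls2) hls21
      by_cases hnil : w.Nil
      · have hiv : i' = v := hnil.eq
        subst hiv
        have hsv : δ ≤ z s i' := by
          apply hvlow s ?_ hs2
          have : (0:ℝ) ≤ ((n:ℝ)+1) * δ := by positivity
          push_cast at hs1 ⊢
          linarith
        nlinarith [hη, hδpos, hsv]
      · obtain ⟨j, hadj, q, rfl⟩ := SimpleGraph.Walk.not_nil_iff.1 hnil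
        have hq : q.length ≤ n := by
          rw [SimpleGraph.Walk.length_cons] at hw; omega
        have hjmem : j ∈ closedNbhd G i' :=
          Finset.mem_insert_of_mem ((G.mem_neighborFinset i' j).2 hadj)
        set a : ℝ := s₀ + (n:ℝ) * δ with ha
        have hsa : a + δ ≤ s := by
          rw [ha]; push_cast at hs1; linarith
        have hle : a ≤ s := by linarith
        have ha0 : 0 ≤ a := by rw [ha]; positivity
        have key := growth (f := fun r => z r i') (a := a) (b := s)
          (m := lamStar/2) (M := (lamStar/2)^(n+1) * δ) hle ha0 hls2
          (((continuous_apply i').comp_continuousOn hzcont).mono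
            (Set.Icc_subset_Ici_self.trans (Set.Ici_subset_Ici.2 ha0)))
          ?_
        · have hza : 0 ≤ z a i' := hznn i' a ha0
          have hMX : (lamStar/2)^(n+1) * δ ≤ z a i' + lamStar/2 * (s - a) := by
            have h1 : lamStar/2 * δ ≤ lamStar/2 * (s - a) := by nlinarith
            calc (lamStar/2)^(n+1) * δ ≤ lamStar/2 * δ := by
                  rw [pow_succ]
                  exact mul_le_mul_of_nonneg_right
                    (mul_le_of_le_one_left (le_of_lt hls2) hηn) (le_of_lt hδpos)
              _ ≤ z a i' + lamStar/2 * (s - a) := by linarith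
          calc (lamStar/2)^(n+1) * δ
              = min ((lamStar/2)^(n+1) * δ) (z a i' + lamStar/2 * (s - a)) :=
                (min_eq_left hMX).symm
            _ ≤ z s i' := key
        · intro x hx hfx
          have hx0 : (0:ℝ) ≤ x := le_trans ha0 hx.1
          have hxt : x ≤ t := le_trans hx.2 hs2
          have hjx : (lamStar/2)^n * δ ≤ z x j := ih j q hq x hx.1 hxt
          have hsumlb : (lamStar/2)^n * δ ≤ ∑ k ∈ closedNbhd G i', z x k :=
            le_trans hjx (Finset.single_le_sum (fun k _ => hznn k x hx0) hjmem)
          have hpospow : (0:ℝ) < (lamStar/2)^n * δ := by positivity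
          have hsumpos : 0 < ∑ k ∈ closedNbhd G i', z x k := lt_of_lt_of_le hpospow hsumlb
          refine ⟨_, ?_, hzder i' x hx0 hsumpos⟩
          have hφi : phi G (z x) i' < lamStar/2 := by
            unfold phi
            have h1 : z x i' / (∑ k ∈ closedNbhd G i', z x k) ≤ z x i' / ((lamStar/2)^n * δ) :=
              div_le_div_of_nonneg_left (hznn i' x hx0) hpospow hsumlb
            have h2 : z x i' / ((lamStar/2)^n * δ) < ((lamStar/2)^(n+1) * δ) / ((lamStar/2)^n * δ) := by
              gcongr
            have h3 : ((lamStar/2)^(n+1) * δ) / ((lamStar/2)^n * δ) = lamStar/2 := by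
              rw [pow_succ]
              field_simp
            linarith
          have hexp : Real.exp (-∑ k ∈ closedNbhd G i', phi G (z x) k) ≤ 1 :=
            Real.exp_le_one_iff.2 (neg_nonpos.2 (Finset.sum_nonneg fun k _ => hφnn x hx0 k))
          have hφnn' : 0 ≤ phi G (z x) i' := hφnn x hx0 i'
          have hmul : phi G (z x) i' * Real.exp (-∑ k ∈ closedNbhd G i', phi G (z x) k)
              ≤ phi G (z x) i' := by nlinarith
          have hli : lamStar ≤ lam i' := hstar.2 ⟨i', rfl⟩
          linarith
  -- conclude
  obtain ⟨w⟩ := hconn.preconnected i v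
  have hlen : (w.toPath : G.Walk i v).length ≤ K := by
    have := w.toPath.2.length_lt
    simpa using le_of_lt this
  have hfin := claim K i w.toPath hlen t (by rw [hs₀]; push_cast; linarith) le_rfl
  have hbε : (lamStar/2)^K * c / K * ε = (lamStar/2)^K * δ := by
    rw [hδ]; field_simp
  rw [hbε]
  exact hfin
end

section
/- Let z have the fluid-limit properties with Σ_{i=1}^K z_i(0) = 1. Then for every h > 0, every i, and every t with 0 < t < τ_h, one has z_i(t) > 0. -/
open Finset

lemma phi_nonneg' {K : ℕ} (G : SimpleGraph (Fin K)) [DecidableRel G.Adj]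
    {x : Fin K → ℝ} (hx : ∀ j, 0 ≤ x j) (i : Fin K) : 0 ≤ phi G x i :=
  div_nonneg (hx i) (Finset.sum_nonneg fun j _ => hx j)

/-- Core positivity-propagation lemma: if some `k` in the closed neighbourhood of `i`
has positive mass throughout `[a, b]`, then `z_i(b) > 0`. -/
lemma posL1 {K : ℕ} (G : SimpleGraph (Fin K)) [DecidableRel G.Adj]
    (lam : Fin K → ℝ) (hlam : ∀ i, 0 < lam i) (lamStar : ℝ)
    (z : ℝ → Fin K → ℝ) (hz : IsFluidLimit G lam lamStar z)
    (i k : Fin K) (hk : k ∈ closedNbhd G i)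
    (a b : ℝ) (ha : 0 ≤ a) (hab : a < b)
    (hpos : ∀ s ∈ Set.Icc a b, 0 < z s k) : 0 < z b i := by
  obtain ⟨hcont, hnn, hincr, hderiv⟩ := hz
  have hcontk : ContinuousOn (fun s => z s k) (Set.Icc a b) :=
    ((continuous_apply k).comp_continuousOn hcont).mono
      (fun s hs => le_trans ha hs.1)
  have hconti : ContinuousOn (fun s => z s i) (Set.Icc a b) :=
    ((continuous_apply i).comp_continuousOn hcont).mono
      (fun s hs => le_trans ha hs.1)
  obtain ⟨sm, hsm, hminOn⟩ := isCompact_Icc.exists_isMinOn ⟨a, le_refl a, le_of_lt hab⟩ hcontk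
  have hm0 : 0 < z sm k := hpos sm hsm
  have hminle : ∀ s ∈ Set.Icc a b, z sm k ≤ z s k := fun s hs => hminOn hs
  have hθ0 : 0 < lam i * z sm k / 2 := by
    have := hlam i; positivity
  by_cases hb : lam i * z sm k / 2 ≤ z b i
  · exact lt_of_lt_of_le hθ0 hb
  push_neg at hb
  have hSclosed : IsClosed ({a} ∪ (Set.Icc a b ∩ (fun s => z s i) ⁻¹' Set.Ici (lam i * z sm k / 2))) :=
    isClosed_singleton.union (hconti.preimage_isClosed_of_isClosed isClosed_Icc isClosed_Ici)
  have hSne : ({a} ∪ (Set.Icc a b ∩ (fun s => z s i) ⁻¹' Set.Ici (lam i * z sm k / 2))).Nonempty :=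
    ⟨a, Or.inl rfl⟩
  have hSbdd : BddAbove ({a} ∪ (Set.Icc a b ∩ (fun s => z s i) ⁻¹' Set.Ici (lam i * z sm k / 2))) := ⟨b, by
    rintro s (rfl | ⟨hs, _⟩)
    · exact le_of_lt hab
    · exact hs.2⟩
  obtain ⟨c, hcS, hcsup⟩ : ∃ c, c ∈ ({a} ∪ (Set.Icc a b ∩ (fun s => z s i) ⁻¹' Set.Ici (lam i * z sm k / 2))) ∧
      IsLUB ({a} ∪ (Set.Icc a b ∩ (fun s => z s i) ⁻¹' Set.Ici (lam i * z sm k / 2))) c :=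
    ⟨_, hSclosed.csSup_mem hSne hSbdd, isLUB_csSup hSne hSbdd⟩
  have hac : a ≤ c := hcsup.1 (Or.inl rfl)
  have hcb : c ≤ b := hcsup.2 (by
    rintro s (rfl | ⟨hs, _⟩)
    · exact le_of_lt hab
    · exact hs.2)
  have hcb' : c < b := by
    rcases hcS with hceq | ⟨_, hcθ⟩
    · have : c = a := hceq
      rw [this]; exact hab
    · rcases lt_or_eq_of_le hcb with hlt | heq
      · exact hlt
      · exact absurd (heq ▸ hcθ) (not_le.mpr hb)
  have hc0 : 0 ≤ c := le_trans ha hac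
  have hsmall : ∀ s, c < s → s ≤ b → z s i < lam i * z sm k / 2 := by
    intro s hcs hsb
    by_contra hge
    push_neg at hge
    have hmem : s ∈ ({a} ∪ (Set.Icc a b ∩ (fun s => z s i) ⁻¹' Set.Ici (lam i * z sm k / 2))) :=
      Or.inr ⟨⟨le_trans hac (le_of_lt hcs), hsb⟩, hge⟩
    exact absurd (hcsup.1 hmem) (not_le.mpr hcs)
  have hmono : StrictMonoOn (fun s => z s i) (Set.Icc c b) := by
    apply strictMonoOn_of_deriv_pos (convex_Icc c b)
      (hconti.mono (Set.Icc_subset_Icc_left hac))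
    intro s hs
    rw [interior_Icc] at hs
    have hs0 : 0 < s := lt_of_le_of_lt hc0 hs.1
    have hsab : s ∈ Set.Icc a b := ⟨le_trans hac (le_of_lt hs.1), le_of_lt hs.2⟩
    have hnnz : ∀ j, 0 ≤ z s j := fun j => hnn j s (le_of_lt hs0)
    have hsumpos : 0 < ∑ j ∈ closedNbhd G i, z s j :=
      lt_of_lt_of_le (hpos s hsab)
        (Finset.single_le_sum (fun j _ => hnnz j) hk)
    have hd := (hderiv i s (le_of_lt hs0) hsumpos).hasDerivAt (Ici_mem_nhds hs0)
    rw [hd.deriv]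
    have hφnn : 0 ≤ phi G (z s) i := phi_nonneg' G hnnz i
    have hexp : Real.exp (-∑ j ∈ closedNbhd G i, phi G (z s) j) ≤ 1 :=
      Real.exp_le_one_iff.mpr (neg_nonpos.mpr (Finset.sum_nonneg fun j _ => phi_nonneg' G hnnz j))
    have h1 : phi G (z s) i * Real.exp (-∑ j ∈ closedNbhd G i, phi G (z s) j)
        ≤ phi G (z s) i := mul_le_of_le_one_right hφnn hexp
    have h2 : phi G (z s) i ≤ z s i / z sm k := by
      rw [phi]
      have hmle : z sm k ≤ ∑ j ∈ closedNbhd G i, z s j :=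
        le_trans (hminle s hsab) (Finset.single_le_sum (fun j _ => hnnz j) hk)
      exact div_le_div_of_nonneg_left (hnnz i) hm0 hmle
    have h3 : z s i / z sm k < lam i * z sm k / 2 / z sm k := by
      gcongr
      exact hsmall s hs.1 (le_of_lt hs.2)
    have hθm : lam i * z sm k / 2 / z sm k = lam i / 2 := by
      field_simp
    have hkey : phi G (z s) i * Real.exp (-∑ j ∈ closedNbhd G i, phi G (z s) j) < lam i / 2 := by
      calc _ ≤ phi G (z s) i := h1
        _ ≤ z s i / z sm k := h2
        _ < lam i * z sm k / 2 / z sm k := h3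
        _ = lam i / 2 := hθm
    linarith [hlam i]
  have hlt := hmono (Set.left_mem_Icc.mpr (le_of_lt hcb')) (Set.right_mem_Icc.mpr (le_of_lt hcb')) hcb'
  have hnnc : 0 ≤ z c i := hnn i c hc0
  simpa using lt_of_le_of_lt hnnc hlt

/-- If `z` is a fluid limit with `∑_i z_i(0) = 1`, then for every `h > 0`, every `i`, and
every `t` with `0 < t < τ_h`, one has `z_i(t) > 0`. -/
theorem stmt4 {K : ℕ} (G : SimpleGraph (Fin K)) [DecidableRel G.Adj]
    (hconn : G.Connected) (lam : Fin K → ℝ) (hlam : ∀ i, 0 < lam i)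
    (lamStar : ℝ) (hstar : IsLeast (Set.range lam) lamStar) (hstar1 : lamStar < 1)
    (z : ℝ → Fin K → ℝ) (hz : IsFluidLimit G lam lamStar z) (hz0 : (∑ i, z 0 i) = 1) :
    ∀ h : ℝ, 0 < h → ∀ i, ∀ t : ℝ, 0 < t → (t : EReal) < tau z h → 0 < z t i := by
  intro h hh i t ht htau
  have hK : 0 < K := i.pos
  have hK' : (0:ℝ) < (K:ℝ) := by exact_mod_cast hK
  have hc1 : 0 < 1 - lamStar := by linarith
  -- total mass stays at least h up to time t
  have hsum : ∀ s : ℝ, 0 ≤ s → s ≤ t → h ≤ ∑ j, z s j := by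
    intro s hs0 hst
    by_contra hlt
    push_neg at hlt
    have hmem : (s : EReal) ∈ ((fun t : ℝ => (t : EReal)) '' {t : ℝ | 0 ≤ t ∧ ∑ i, z t i < h}) :=
      ⟨s, ⟨hs0, hlt⟩, rfl⟩
    have h1 : tau z h ≤ (s : EReal) := sInf_le hmem
    have h2 : (s : EReal) ≤ (t : EReal) := EReal.coe_le_coe_iff.mpr hst
    exact absurd (lt_of_lt_of_le htau (le_trans h1 h2)) (lt_irrefl _)
  -- choose a small backward window δ
  obtain ⟨δ, hδ0, hδ1, hδ2⟩ :
      ∃ δ : ℝ, 0 < δ ∧ δ ≤ t / 2 ∧ (1 - lamStar) * δ ≤ h / (2 * K) := by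
    refine ⟨min (t / 2) (h / (2 * K * (1 - lamStar))), ?_, min_le_left _ _, ?_⟩
    · exact lt_min (by linarith) (by positivity)
    · have hle : min (t / 2) (h / (2 * K * (1 - lamStar))) ≤ h / (2 * K * (1 - lamStar)) :=
        min_le_right _ _
      have h3 : (1 - lamStar) * (h / (2 * K * (1 - lamStar))) = h / (2 * K) := by
        field_simp
      calc (1 - lamStar) * min (t / 2) (h / (2 * K * (1 - lamStar)))
          ≤ (1 - lamStar) * (h / (2 * K * (1 - lamStar))) :=
            mul_le_mul_of_nonneg_left hle (le_of_lt hc1)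
        _ = h / (2 * K) := h3
  have hs₀0 : 0 < t - δ := by linarith
  have hs₀t : t - δ < t := by linarith
  -- a vertex with large mass at time t - δ
  obtain ⟨j, _, hjbig⟩ : ∃ j ∈ Finset.univ, h / K ≤ z (t - δ) j := by
    have : Nonempty (Fin K) := ⟨i⟩
    apply Finset.exists_le_of_sum_le Finset.univ_nonempty
    have hconst : ∑ _j : Fin K, h / K = h := by
      rw [Finset.sum_const, Finset.card_univ, Fintype.card_fin, nsmul_eq_mul]
      field_simp
    rw [hconst]; exact hsum (t - δ) (le_of_lt hs₀0) (le_of_lt hs₀t)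
  -- persistence of z j on [t - δ, t]
  have hjpos : ∀ s ∈ Set.Icc (t - δ) t, 0 < z s j := by
    intro s hs
    have hincr := hz.2.2.1 j (t - δ) s (le_of_lt hs₀0) hs.1
    have hss₀ : s - (t - δ) ≤ δ := by linarith [hs.2]
    have key : (1 - lamStar) * (s - (t - δ)) ≤ h / (2 * K) :=
      le_trans (mul_le_mul_of_nonneg_left hss₀ (le_of_lt hc1)) hδ2
    have hring : (lamStar - 1) * (s - (t - δ)) = -((1 - lamStar) * (s - (t - δ))) := by ring
    have hhK : h / (2 * K) < h / K := by
      apply div_lt_div_of_pos_left hh hK'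
      linarith
    linarith [hjbig, hincr, hring.ge, hring.le]
  -- propagation along walks
  have hstep : ∀ v u : Fin K,
      (∃ a : ℝ, 0 < a ∧ a < t ∧ ∀ s, a < s → s ≤ t → 0 < z s v) → G.Adj v u →
      (∃ a : ℝ, 0 < a ∧ a < t ∧ ∀ s, a < s → s ≤ t → 0 < z s u) := by
    rintro v u ⟨a, ha0, hat, hpos⟩ hadj
    have hvu : v ∈ closedNbhd G u := by
      rw [closedNbhd, Finset.mem_insert]
      right
      rw [SimpleGraph.mem_neighborFinset]
      exact hadj.symm
    refine ⟨(a + t) / 2, by linarith, by linarith, ?_⟩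
    intro s hs1 hs2
    have hca : a < (a + (a + t) / 2) / 2 := by linarith
    have hcs : (a + (a + t) / 2) / 2 < s := by linarith
    exact posL1 G lam hlam lamStar z hz u v hvu _ s (by linarith) hcs
      (fun r hr => hpos r (lt_of_lt_of_le hca hr.1) (le_trans hr.2 hs2))
  have hwalk : ∀ u v : Fin K, G.Walk u v →
      (∃ a : ℝ, 0 < a ∧ a < t ∧ ∀ s, a < s → s ≤ t → 0 < z s u) →
      (∃ a : ℝ, 0 < a ∧ a < t ∧ ∀ s, a < s → s ≤ t → 0 < z s v) := by
    intro u v p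
    induction p with
    | nil => exact id
    | cons hadj q ih => intro hW; exact ih (hstep _ _ hW hadj)
  obtain ⟨p⟩ := hconn.preconnected j i
  obtain ⟨a, ha0, hat, hposi⟩ := hwalk j i p
    ⟨t - δ, hs₀0, hs₀t, fun s hs1 hs2 => hjpos s ⟨le_of_lt hs1, hs2⟩⟩
  exact hposi t hat (le_refl t)
end

section
/- Set K_1 = 2/λ_* − 1 > 1 and K_2 = λ_*/2 > 0. Let z be an ℝ^K-valued function of a real variable with nonnegative coordinates, let t be fixed, and let i,j be vertices with i ∈ V_j, i ≠ j. Suppose Σ_{k∈V_j} z_k(t) > 0 and that z_j is differentiable at t with z_j'(t) = λ_j − φ_j(z(t))·exp(−Σ_{k∈V_j} φ_k(z(t))). If z_i(t) > K_1·z_j(t), then z_j'(t) > K_2. -/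
open Finset

/-- With `K₁ = 2/λ_* − 1 > 1` and `K₂ = λ_*/2 > 0`: if `z` has nonnegative coordinates, the
neighbouring vertices `i ≠ j` satisfy `z_i(t) > K₁ z_j(t)`, and `z_j` is differentiable at
`t` with derivative `λ_j − φ_j(z(t)) exp(−∑_{k∈V_j} φ_k(z(t)))`, then `z_j'(t) > K₂`. -/
theorem stmt8 {K : ℕ} (G : SimpleGraph (Fin K)) [DecidableRel G.Adj]
    (lam : Fin K → ℝ) (hlam : ∀ i, 0 < lam i)
    (lamStar : ℝ) (hstar : IsLeast (Set.range lam) lamStar) (hstar1 : lamStar < 1)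
    (K₁ K₂ : ℝ) (hK₁ : K₁ = 2 / lamStar - 1) (hK₂ : K₂ = lamStar / 2)
    (z : ℝ → Fin K → ℝ) (t : ℝ) (hnn : ∀ k, ∀ s : ℝ, 0 ≤ z s k)
    (i j : Fin K) (hij : i ≠ j) (hmem : i ∈ closedNbhd G j)
    (hsum : 0 < ∑ k ∈ closedNbhd G j, z t k)
    (hderiv : HasDerivAt (fun s => z s j)
      (lam j - phi G (z t) j * Real.exp (-∑ k ∈ closedNbhd G j, phi G (z t) k)) t)
    (hgt : K₁ * z t j < z t i) :
    1 < K₁ ∧ 0 < K₂ ∧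
      ∀ d : ℝ, HasDerivAt (fun s => z s j) d t → K₂ < d := by
  obtain ⟨⟨i0, hi0⟩, hlb⟩ := hstar
  have hpos : 0 < lamStar := hi0 ▸ hlam i0
  have hK1gt : 1 < K₁ := by
    rw [hK₁]
    have : 2 < 2 / lamStar := by
      rw [lt_div_iff₀ hpos]; nlinarith
    linarith
  refine ⟨hK1gt, by rw [hK₂]; positivity, ?_⟩
  intro d hd
  have hdeq : d = lam j - phi G (z t) j * Real.exp (-∑ k ∈ closedNbhd G j, phi G (z t) k) :=
    hd.unique hderiv
  -- φ_j < λ*/2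
  have hjmem : j ∈ closedNbhd G j := Finset.mem_insert_self _ _
  have hphij : phi G (z t) j < lamStar / 2 := by
    rcases eq_or_lt_of_le (hnn j t) with h0 | h0
    · simp [phi, ← h0]; positivity
    · have hsub : ({i, j} : Finset (Fin K)) ⊆ closedNbhd G j := by
        intro x hx
        simp only [Finset.mem_insert, Finset.mem_singleton] at hx
        rcases hx with rfl | rfl
        · exact hmem
        · exact hjmem
      have hsum2 : z t i + z t j ≤ ∑ k ∈ closedNbhd G j, z t k := by
        have := Finset.sum_le_sum_of_subset_of_nonneg hsub
          (fun k _ _ => hnn k t)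
        rwa [Finset.sum_pair hij] at this
      have hbig : (2 / lamStar) * z t j < ∑ k ∈ closedNbhd G j, z t k := by
        rw [hK₁] at hgt; nlinarith
      rw [phi, div_lt_iff₀ hsum]
      have h2 : 0 < 2 / lamStar := by positivity
      calc z t j = lamStar / 2 * ((2 / lamStar) * z t j) := by
            field_simp
        _ < lamStar / 2 * ∑ k ∈ closedNbhd G j, z t k := by
            exact mul_lt_mul_of_pos_left hbig (by positivity)
  have hexp : Real.exp (-∑ k ∈ closedNbhd G j, phi G (z t) k) ≤ 1 := by
    apply Real.exp_le_one_iff.mpr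
    simp only [neg_nonpos]
    apply Finset.sum_nonneg
    intro k _
    exact div_nonneg (hnn k t) (Finset.sum_nonneg fun m _ => hnn m t)
  have hphijnn : 0 ≤ phi G (z t) j := div_nonneg (hnn j t) hsum.le
  have hexppos : 0 < Real.exp (-∑ k ∈ closedNbhd G j, phi G (z t) k) := Real.exp_pos _
  have hprod : phi G (z t) j * Real.exp (-∑ k ∈ closedNbhd G j, phi G (z t) k)
      < lamStar / 2 := by
    calc phi G (z t) j * Real.exp _ ≤ phi G (z t) j * 1 :=
          mul_le_mul_of_nonneg_left hexp hphijnn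
      _ = phi G (z t) j := mul_one _
      _ < lamStar / 2 := hphij
  have hlj : lamStar ≤ lam j := hlb ⟨j, rfl⟩
  rw [hdeq, hK₂]; linarith
end

section
/- Let z ∈ ℝ^K have z_i > 0 for every i. Then Σ_{i=1}^K (z_i/Σ_{k=1}^K z_k) · ln(1/φ_i(z)) ≤ ln V. -/
open Finset

/-- If `z_i > 0` for every `i`, then
`∑_i (z_i/∑_k z_k) ln(1/φ_i(z)) ≤ ln V`. -/
theorem stmt11 {K V : ℕ} (G : SimpleGraph (Fin K)) [DecidableRel G.Adj]
    (hreg : ∀ i, (closedNbhd G i).card = V)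
    (z : Fin K → ℝ) (hz : ∀ i, 0 < z i) :
    ∑ i, (z i / ∑ k, z k) * Real.log (1 / phi G z i) ≤ Real.log V := by
  rcases Nat.eq_zero_or_pos K with hK | hK
  · subst hK
    simp only [Finset.univ_eq_empty, Finset.sum_empty]
    rcases Nat.eq_zero_or_pos V with h | h
    · simp [h]
    · exact Real.log_nonneg (by exact_mod_cast h)
  set Z := ∑ k, z k with hZdef
  have hZ : 0 < Z := Finset.sum_pos (fun i _ => hz i) ⟨⟨0, hK⟩, Finset.mem_univ _⟩
  set s : Fin K → ℝ := fun i => ∑ j ∈ closedNbhd G i, z j with hsdef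
  have hmem : ∀ i : Fin K, i ∈ closedNbhd G i := fun i => Finset.mem_insert_self _ _
  have hs : ∀ i, 0 < s i := fun i => Finset.sum_pos (fun j _ => hz j) ⟨i, hmem i⟩
  have hVpos : 0 < V := by
    have h1 := hreg ⟨0, hK⟩
    have h2 : 0 < (closedNbhd G ⟨0, hK⟩).card := Finset.card_pos.mpr ⟨_, hmem _⟩
    omega
  have hVR : (0:ℝ) < V := by exact_mod_cast hVpos
  have hmem_symm : ∀ i j : Fin K, j ∈ closedNbhd G i ↔ i ∈ closedNbhd G j := by
    intro i j
    simp only [closedNbhd, Finset.mem_insert, SimpleGraph.mem_neighborFinset]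
    rw [eq_comm, G.adj_comm]
  have hsum_s : ∑ i, s i = V * Z := by
    have h1 : ∑ i, s i = ∑ i, ∑ j, if j ∈ closedNbhd G i then z j else 0 := by
      refine Finset.sum_congr rfl fun i _ => ?_
      rw [Finset.sum_ite_mem, Finset.univ_inter]
    rw [h1, Finset.sum_comm]
    have h2 : ∀ j : Fin K, (∑ i, if j ∈ closedNbhd G i then z j else 0) = V * z j := by
      intro j
      have : (∑ i, if j ∈ closedNbhd G i then z j else 0)
          = ∑ i, if i ∈ closedNbhd G j then z j else 0 := by
        refine Finset.sum_congr rfl fun i _ => ?_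
        exact if_congr (hmem_symm i j) rfl rfl
      rw [this, Finset.sum_ite_mem, Finset.univ_inter, Finset.sum_const, hreg j,
        nsmul_eq_mul]
    rw [Finset.sum_congr rfl fun j _ => h2 j, ← Finset.mul_sum]
  have hinv : ∀ i, 1 / phi G z i = s i / z i := by
    intro i
    rw [phi, one_div_div]
  have hstep : ∀ i, Real.log (1 / phi G z i) ≤ Real.log V + ((s i / z i) / V - 1) := by
    intro i
    rw [hinv i]
    have h1 : 0 < s i / z i / V := by
      have := hs i; have := hz i; positivity
    have h2 := Real.log_le_sub_one_of_pos h1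
    rw [Real.log_div (by have := hs i; have := hz i; positivity) (ne_of_gt hVR)] at h2
    linarith
  calc ∑ i, (z i / Z) * Real.log (1 / phi G z i)
      ≤ ∑ i, (z i / Z) * (Real.log V + ((s i / z i) / V - 1)) :=
        Finset.sum_le_sum fun i _ => by
          have hp : 0 ≤ z i / Z := by have := hz i; positivity
          exact mul_le_mul_of_nonneg_left (hstep i) hp
    _ = Real.log V := by
        have h1 : ∑ i, z i / Z = 1 := by
          rw [← Finset.sum_div, ← hZdef, div_self (ne_of_gt hZ)]
        have h2 : ∑ i, (z i / Z) * ((s i / z i) / V) = 1 := by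
          have he : ∀ i ∈ Finset.univ, (z i / Z) * ((s i / z i) / V)
              = s i * (1 / (Z * V)) := by
            intro i _
            have hzi := (hz i).ne'
            field_simp
          rw [Finset.sum_congr rfl he, ← Finset.sum_mul, hsum_s]
          field_simp
        simp only [mul_add, mul_sub, mul_one]
        rw [Finset.sum_add_distrib, Finset.sum_sub_distrib, ← Finset.sum_mul, h1, h2]
        ring
end

section
/- Fix λ ∈ ℝ and define Φ on the open positive orthant H = {x ∈ ℝ^K : x_i > 0 for all i} by Φ_i(x) = λ − φ_i(x)·exp(−Σ_{j∈V_i} φ_j(x)). Let A be the K×K matrix with A_{ij} = 1 if j ∈ V_i and A_{ij} = 0 otherwise, and let I be the K×K identity matrix. Then Φ is Fréchet differentiable at the all-ones vector 𝟙 = (1,…,1), and its derivative at 𝟙 is the linear map v ↦ −(e^{−1}/V³)·(A − V·I)²·v. Equivalently, the Jacobian matrix of Φ at 𝟙 has entries: −e^{−1}(V−1)/V² if j = i; e^{−1}|V_i ∪ V_j|/V³ if j ∈ V_i and j ≠ i; and −e^{−1}|V_i ∩ V_j|/V³ if j ∉ V_i. -/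
open Finset

/-- The matrix `A` with `A_{ij} = 1` if `j ∈ V_i` and `A_{ij} = 0` otherwise. -/
def adjMat {K : ℕ} (G : SimpleGraph (Fin K)) [DecidableRel G.Adj] :
    Matrix (Fin K) (Fin K) ℝ :=
  Matrix.of fun i j => if j ∈ closedNbhd G i then 1 else 0

/-!
At `𝟙` every `φ_j` equals `1/V` and every neighbourhood sum `S_i = ∑_{j ∈ V_i} φ_j` equals `1`.
Writing `B = A - V • I`, the quotient rule gives `dφ_j(v) = -(B v)_j / V²`, and since `S = A φ`,
`dS(v) = -(A B v) / V²`. The product rule then gives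
`dΦ_i(v) = -e⁻¹ (dφ_i(v) - dS_i(v) / V) = -(e⁻¹ / V³) ((A - V • I) B v)_i`.
The entries follow from `(A²)_{ij} = |V_i ∩ V_j|` (as `A` is symmetric) and
`|V_i ∪ V_j| = 2V - |V_i ∩ V_j|`.
-/

open scoped Matrix

namespace closedNbhd

variable {K : ℕ} (G : SimpleGraph (Fin K)) [DecidableRel G.Adj]

lemma self_mem (i : Fin K) : i ∈ closedNbhd G i := mem_insert_self _ _

variable {G} in
lemma mem_comm {i j : Fin K} : j ∈ closedNbhd G i ↔ i ∈ closedNbhd G j := by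
  simp only [closedNbhd, mem_insert, SimpleGraph.mem_neighborFinset, eq_comm, G.adj_comm]

lemma cast_ne_zero_of_card_eq {V : ℕ} {i : Fin K} (h : (closedNbhd G i).card = V) :
    (V : ℝ) ≠ 0 := by
  rw [← h]
  exact_mod_cast card_ne_zero_of_mem (self_mem G i)

end closedNbhd

section adjMat

variable {K : ℕ} (G : SimpleGraph (Fin K)) [DecidableRel G.Adj]

lemma adjMat_mulVec_apply (v : Fin K → ℝ) (i : Fin K) :
    (adjMat G *ᵥ v) i = ∑ j ∈ closedNbhd G i, v j := by
  simp [adjMat, Matrix.mulVec, dotProduct, sum_ite_mem]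

lemma adjMat_sub_smul_one_mulVec_apply (c : ℝ) (v : Fin K → ℝ) (i : Fin K) :
    ((adjMat G - c • 1) *ᵥ v) i = ∑ j ∈ closedNbhd G i, v j - c * v i := by
  simp [Matrix.sub_mulVec, adjMat_mulVec_apply, Matrix.smul_mulVec]

lemma adjMat_mul_self_apply (i j : Fin K) :
    (adjMat G * adjMat G) i j = ((closedNbhd G i ∩ closedNbhd G j).card : ℝ) := by
  simp only [Matrix.mul_apply, adjMat, Matrix.of_apply, mul_ite, mul_one, mul_zero,
    closedNbhd.mem_comm (i := _) (j := j)]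
  simp [← ite_and, ← mem_inter, sum_ite_mem, inter_comm]

lemma adjMat_sub_smul_one_sq_apply (c : ℝ) (i j : Fin K) :
    ((adjMat G - c • 1) ^ 2 : Matrix (Fin K) (Fin K) ℝ) i j =
      ((closedNbhd G i ∩ closedNbhd G j).card : ℝ)
        - (if j ∈ closedNbhd G i then 2 * c else 0) + (if i = j then c ^ 2 else 0) := by
  simp only [sq, sub_mul, mul_sub, Matrix.smul_mul, Matrix.mul_smul, one_mul, mul_one,
    smul_smul, Matrix.sub_apply, Matrix.smul_apply, adjMat_mul_self_apply, Matrix.one_apply]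
  simp only [adjMat, Matrix.of_apply]
  split_ifs <;> simp <;> ring

lemma neg_smul_adjMat_sub_smul_one_sq_apply {V : ℕ} (hreg : ∀ i, (closedNbhd G i).card = V)
    (i j : Fin K) :
    ((-(Real.exp (-1) / (V : ℝ) ^ 3)) • ((adjMat G - (V : ℝ) • 1) ^ 2) :
        Matrix (Fin K) (Fin K) ℝ) i j =
      if j = i then -(Real.exp (-1) * ((V : ℝ) - 1) / (V : ℝ) ^ 2)
      else if j ∈ closedNbhd G i then
        Real.exp (-1) * ((closedNbhd G i ∪ closedNbhd G j).card : ℝ) / (V : ℝ) ^ 3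
      else -(Real.exp (-1) * ((closedNbhd G i ∩ closedNbhd G j).card : ℝ) / (V : ℝ) ^ 3) := by
  have hV := closedNbhd.cast_ne_zero_of_card_eq G (hreg i)
  rw [Matrix.smul_apply, adjMat_sub_smul_one_sq_apply, smul_eq_mul]
  rcases eq_or_ne j i with rfl | hji
  · simp only [if_true, inter_self, hreg, closedNbhd.self_mem]
    field_simp
    ring
  · by_cases hmem : j ∈ closedNbhd G i
    · have hcard := card_union_add_card_inter (closedNbhd G i) (closedNbhd G j)
      rw [hreg, hreg] at hcard
      have hunion : ((closedNbhd G i ∪ closedNbhd G j).card : ℝ) =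
          2 * V - (closedNbhd G i ∩ closedNbhd G j).card := by
        rw [eq_sub_iff_add_eq]; exact_mod_cast hcard.trans (two_mul V).symm
      simp only [hji, hji.symm, hmem, if_true, if_false, hunion]
      field_simp
      ring
    · simp only [hji, hji.symm, hmem, if_false]
      ring

end adjMat

section derivative

variable {K V : ℕ} (G : SimpleGraph (Fin K)) [DecidableRel G.Adj]

lemma phi_one {j : Fin K} (h : (closedNbhd G j).card = V) :
    phi G (fun _ => 1) j = (V : ℝ)⁻¹ := by
  simp [phi, h]

lemma hasFDerivAt_phi_one {j : Fin K} (h : (closedNbhd G j).card = V) :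
    HasFDerivAt (fun x => phi G x j)
      (-((V : ℝ) ^ 2)⁻¹ • (ContinuousLinearMap.proj j ∘L
        LinearMap.toContinuousLinearMap (Matrix.toLin' (adjMat G - (V : ℝ) • 1))))
      (fun _ => 1) := by
  have hV := closedNbhd.cast_ne_zero_of_card_eq G h
  have hsum : HasFDerivAt (fun x : Fin K → ℝ => ∑ k ∈ closedNbhd G j, x k)
      (∑ k ∈ closedNbhd G j, ContinuousLinearMap.proj (R := ℝ) (φ := fun _ => ℝ) k) (fun _ => 1) :=
    HasFDerivAt.fun_sum fun k _ => hasFDerivAt_apply k _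
  have hsum_one : ∑ k ∈ closedNbhd G j, (fun _ : Fin K => (1 : ℝ)) k = V := by simp [h]
  have hinv := (hasDerivAt_inv (hsum_one ▸ hV)).comp_hasFDerivAt _ hsum
  refine ((hasFDerivAt_apply j _).mul hinv |>.congr_fderiv ?_).congr_of_eventuallyEq
    (.of_forall fun x => by simp [phi, div_eq_mul_inv])
  ext v
  simp [hsum_one, adjMat_mulVec_apply]
  field_simp
  ring

end derivative

/-- The map `Φ_i(x) = λ − φ_i(x) exp(−∑_{j∈V_i} φ_j(x))` is Fréchet differentiable at the
all-ones vector `𝟙` with derivative `v ↦ −(e⁻¹/V³)(A − V·I)² v`; equivalently the Jacobian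
at `𝟙` has entries `−e⁻¹(V−1)/V²` on the diagonal, `e⁻¹|V_i ∪ V_j|/V³` for `j ∈ V_i`,
`j ≠ i`, and `−e⁻¹|V_i ∩ V_j|/V³` for `j ∉ V_i`. -/
theorem stmt13 {K V : ℕ} (G : SimpleGraph (Fin K)) [DecidableRel G.Adj]
    (hreg : ∀ i, (closedNbhd G i).card = V) (lam : ℝ) :
    HasFDerivAt
      (fun x : Fin K → ℝ => fun i =>
        lam - phi G x i * Real.exp (-∑ j ∈ closedNbhd G i, phi G x j))
      (LinearMap.toContinuousLinearMap
        ((-(Real.exp (-1) / (V : ℝ) ^ 3)) • Matrix.toLin' ((adjMat G - (V : ℝ) • 1) ^ 2)))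
      (fun _ => 1) ∧
    ∀ i j : Fin K,
      (((-(Real.exp (-1) / (V : ℝ) ^ 3)) • ((adjMat G - (V : ℝ) • 1) ^ 2) :
          Matrix (Fin K) (Fin K) ℝ)) i j =
        if j = i then -(Real.exp (-1) * ((V : ℝ) - 1) / (V : ℝ) ^ 2)
        else if j ∈ closedNbhd G i then
          Real.exp (-1) * ((closedNbhd G i ∪ closedNbhd G j).card : ℝ) / (V : ℝ) ^ 3
        else -(Real.exp (-1) * ((closedNbhd G i ∩ closedNbhd G j).card : ℝ) / (V : ℝ) ^ 3) := by
  refine ⟨hasFDerivAt_pi'.mpr fun i => ?_, neg_smul_adjMat_sub_smul_one_sq_apply G hreg⟩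
  have hV := closedNbhd.cast_ne_zero_of_card_eq G (hreg i)
  have hsum_one : ∑ _j ∈ closedNbhd G i, (V : ℝ)⁻¹ = 1 := by simp [hreg i, hV]
  have hsum := HasFDerivAt.fun_sum fun j (_ : j ∈ closedNbhd G i) => hasFDerivAt_phi_one G (hreg j)
  refine ((hasFDerivAt_const lam _).sub
    ((hasFDerivAt_phi_one G (hreg i)).mul hsum.neg.exp)).congr_fderiv ?_
  ext v
  simp only [sub_apply, add_apply, smul_apply, neg_apply, ContinuousLinearMap.comp_apply,
    zero_apply, FunLike.coe_sum, Finset.sum_apply, Pi.neg_apply, ContinuousLinearMap.proj_apply,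
    LinearMap.coe_toContinuousLinearMap', LinearMap.smul_apply, Matrix.toLin'_apply, smul_eq_mul,
    Pi.smul_apply, phi_one G (hreg _), hsum_one, ← Finset.mul_sum]
  rw [sq (adjMat G - _), ← Matrix.mulVec_mulVec, adjMat_sub_smul_one_mulVec_apply G _ (_ *ᵥ v)]
  field_simp
  ring
end

section
/- Fix λ ∈ ℝ and define F : ℝ^K → ℝ^K by F_i(u) = λ − u_i·exp(−Σ_{j∈V_i} u_j). Let z : [0,∞) → ℝ^K be differentiable with z(t) ∈ H = {x : x_i > 0 ∀i} and z'(t) = F(φ(z(t))) for all t ≥ 0. Then there exists an increasing continuous bijection ν : [0,∞) → [0,∞), differentiable with ν'(t) = Σ_{j=1}^K z_j(ν(t)), such that the function w(t) = z(ν(t)) / Σ_{j=1}^K z_j(ν(t)) satisfies, for all t ≥ 0, w'(t) = F(φ(w(t))) − (Σ_{k=1}^K F_k(φ(w(t))))·w(t). -/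
open Finset

/-- `F_i(u) = λ − u_i exp(−∑_{j∈V_i} u_j)`. -/
noncomputable def Ffun {K : ℕ} (G : SimpleGraph (Fin K)) [DecidableRel G.Adj]
    (lam : ℝ) (u : Fin K → ℝ) (i : Fin K) : ℝ :=
  lam - u i * Real.exp (-∑ j ∈ closedNbhd G i, u j)

/-! The time change is the inverse of `τ(s) = ∫₀ˢ 1 / S` with `S = ∑ⱼ zⱼ`, so that `ν' = S(ν)`.
Since `|Fᵢ(φ(x))| ≤ |λ| + 1` on the positive orthant, `S` grows at most linearly, hence `τ` grows
at least logarithmically and `ν` is defined on all of `[0, ∞)`. As `φ` is homogeneous of degree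
zero, `φ(w) = φ(z ∘ ν)`, and the quotient rule for `w = (z ∘ ν) / S(ν)` gives the equation. -/

open Filter Set

theorem tendsto_integral_inv_atTop {S : ℝ → ℝ} {C : ℝ} (hS : Continuous S)
    (hpos : ∀ s, 0 < S s) (hle : ∀ s, 0 ≤ s → S s ≤ C * (1 + s)) :
    Tendsto (fun s => ∫ u in (0 : ℝ)..s, (S u)⁻¹) atTop atTop := by
  have hC : 0 < C := by linarith [hpos 0, hle 0 le_rfl]
  have hlog : ∀ s, 0 ≤ s → C⁻¹ * Real.log (1 + s) ≤ ∫ u in (0 : ℝ)..s, (S u)⁻¹ := by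
    intro s hs
    have hcomparison : ∫ u in (0 : ℝ)..s, (C * (1 + u))⁻¹ = C⁻¹ * Real.log (1 + s) := by
      simp only [mul_inv]
      rw [intervalIntegral.integral_const_mul,
        intervalIntegral.integral_comp_add_left (fun x => x⁻¹), integral_inv_of_pos] <;>
        norm_num
      linarith
    rw [← hcomparison]
    refine intervalIntegral.integral_mono_on hs ?_ ?_ fun u hu => inv_anti₀ (hpos u) (hle u hu.1)
    · refine ContinuousOn.intervalIntegrable (ContinuousOn.inv₀ (by fun_prop) fun u hu => ?_)
      rw [uIcc_of_le hs] at hu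
      nlinarith [hu.1]
    · exact (hS.inv₀ fun u => (hpos u).ne').intervalIntegrable _ _
  refine tendsto_atTop_mono' _ ((eventually_ge_atTop 0).mono hlog) ?_
  exact (Real.tendsto_log_atTop.comp (tendsto_atTop_add_const_left _ 1 tendsto_id)).const_mul_atTop
    (inv_pos.2 hC)

theorem exists_orderIso_hasDerivAt {S : ℝ → ℝ} {C : ℝ} (hS : Continuous S)
    (hpos : ∀ s, 0 < S s) (hle : ∀ s, S s ≤ C * (1 + |s|)) :
    ∃ ν : ℝ ≃o ℝ, ν 0 = 0 ∧ ∀ t, HasDerivAt ν (S (ν t)) t := by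
  set τ : ℝ → ℝ := fun s => ∫ u in (0 : ℝ)..s, (S u)⁻¹
  have hτd : ∀ s, HasDerivAt τ (S s)⁻¹ s := fun s =>
    ((hS.inv₀ fun u => (hpos u).ne').integral_hasStrictDerivAt 0 s).hasDerivAt
  have hτmono : StrictMono τ := strictMono_of_hasDerivAt_pos hτd fun s => inv_pos.2 (hpos s)
  have hτcont : Continuous τ := continuous_iff_continuousAt.2 fun s => (hτd s).continuousAt
  have htop : Tendsto τ atTop atTop :=
    tendsto_integral_inv_atTop hS hpos fun s hs => by simpa [abs_of_nonneg hs] using hle s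
  have hbot : Tendsto τ atBot atBot := by
    have hreflected : Tendsto (fun s => ∫ u in (0 : ℝ)..s, (S (-u))⁻¹) atTop atTop :=
      tendsto_integral_inv_atTop (hS.comp continuous_neg) (fun u => hpos _) fun s hs => by
        simpa [abs_of_nonneg hs] using hle (-s)
    have hτneg : τ = fun s => -∫ u in (0 : ℝ)..(-s), (S (-u))⁻¹ := by
      funext s
      rw [intervalIntegral.integral_comp_neg (fun u => (S u)⁻¹), neg_neg, neg_zero,
        intervalIntegral.integral_symm, neg_neg]
    rw [hτneg]
    exact tendsto_neg_atTop_atBot.comp (hreflected.comp tendsto_neg_atBot_atTop)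
  let e : ℝ ≃o ℝ := hτmono.orderIsoOfSurjective τ (hτcont.surjective htop hbot)
  refine ⟨e.symm, ?_, fun t => ?_⟩
  · rw [OrderIso.symm_apply_eq]
    exact intervalIntegral.integral_same.symm
  · simpa using HasDerivAt.of_local_left_inverse e.symm.continuous.continuousAt (hτd (e.symm t))
      (inv_pos.2 (hpos _)).ne' (Eventually.of_forall e.apply_symm_apply)

theorem hasDerivWithinAt_inv_sum_smul_comp {ι : Type*} [Fintype ι] {z : ℝ → ι → ℝ} {v : ι → ℝ}
    {ν : ℝ → ℝ} {s t : Set ℝ} {x : ℝ} (hz : HasDerivWithinAt z v t (ν x))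
    (hν : HasDerivWithinAt ν (∑ j, z (ν x) j) s x) (hst : MapsTo ν s t)
    (hsum : ∑ j, z (ν x) j ≠ 0) :
    HasDerivWithinAt (fun y => (∑ j, z (ν y) j)⁻¹ • z (ν y))
      (v - (∑ k, v k) • (∑ j, z (ν x) j)⁻¹ • z (ν x)) s x := by
  have hcurve : HasDerivWithinAt (fun y => z (ν y)) ((∑ j, z (ν x) j) • v) s x :=
    hz.scomp_of_eq x hν hst rfl
  have hmass : HasDerivWithinAt (fun y => ∑ j, z (ν y) j) ((∑ j, z (ν x) j) * ∑ k, v k) s x := by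
    simpa [Finset.mul_sum] using
      HasDerivWithinAt.fun_sum fun j _ => hasDerivWithinAt_pi.1 hcurve j
  refine ((hmass.inv hsum).smul hcurve).congr_deriv ?_
  funext i
  simp only [Pi.add_apply, Pi.sub_apply, Pi.smul_apply, Pi.inv_apply, smul_eq_mul]
  field_simp
  ring

section

variable {K : ℕ} (G : SimpleGraph (Fin K)) [DecidableRel G.Adj]

theorem phi_smul {c : ℝ} (hc : c ≠ 0) (x : Fin K → ℝ) : phi G (c • x) = phi G x := by
  funext i
  simp only [phi, Pi.smul_apply, smul_eq_mul, ← Finset.mul_sum]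
  rw [mul_div_mul_left _ _ hc]

theorem abs_Ffun_phi_le (lam : ℝ) {x : Fin K → ℝ} (hx : ∀ i, 0 < x i) (i : Fin K) :
    |Ffun G lam (phi G x) i| ≤ |lam| + 1 := by
  have hi : i ∈ closedNbhd G i := Finset.mem_insert_self _ _
  have hphi_nonneg : ∀ j, 0 ≤ phi G x j := fun j =>
    div_nonneg (hx j).le (Finset.sum_nonneg fun k _ => (hx k).le)
  have hphi_le : phi G x i ≤ 1 := by
    rw [phi, div_le_one (Finset.sum_pos (fun k _ => hx k) ⟨i, hi⟩)]
    exact Finset.single_le_sum (fun k _ => (hx k).le) hi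
  have hexp : Real.exp (-∑ j ∈ closedNbhd G i, phi G x j) ≤ 1 := by
    rw [Real.exp_le_one_iff, neg_nonpos]
    exact Finset.sum_nonneg fun k _ => hphi_nonneg k
  have hprod : |phi G x i * Real.exp (-∑ j ∈ closedNbhd G i, phi G x j)| ≤ 1 := by
    rw [abs_of_nonneg (mul_nonneg (hphi_nonneg i) (Real.exp_pos _).le)]
    exact mul_le_one₀ hphi_le (Real.exp_pos _).le hexp
  calc |Ffun G lam (phi G x) i|
      ≤ |lam| + |phi G x i * Real.exp (-∑ j ∈ closedNbhd G i, phi G x j)| := abs_sub _ _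
    _ ≤ |lam| + 1 := by linarith

theorem sum_le_sum_zero_add_mul {lam : ℝ} {z : ℝ → Fin K → ℝ}
    (hpos : ∀ t : ℝ, 0 ≤ t → ∀ i, 0 < z t i)
    (hderiv : ∀ t : ℝ, 0 ≤ t → HasDerivWithinAt z (Ffun G lam (phi G (z t))) (Ici 0) t)
    {s : ℝ} (hs : 0 ≤ s) :
    ∑ j, z s j ≤ ∑ j, z 0 j + K * (|lam| + 1) * s := by
  have hmass : ∀ u ∈ Ici (0 : ℝ), HasDerivWithinAt (fun u => ∑ j, z u j)
      (∑ k, Ffun G lam (phi G (z u)) k) (Ici 0) u := fun u hu =>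
    HasDerivWithinAt.fun_sum fun j _ => hasDerivWithinAt_pi.1 (hderiv u hu) j
  have hbound : ∀ u ∈ Ici (0 : ℝ), ‖∑ k, Ffun G lam (phi G (z u)) k‖ ≤ K * (|lam| + 1) :=
    fun u hu => by
      calc ‖∑ k, Ffun G lam (phi G (z u)) k‖ ≤ ∑ k, |Ffun G lam (phi G (z u)) k| :=
            norm_sum_le _ _
        _ ≤ ∑ _k : Fin K, (|lam| + 1) :=
            Finset.sum_le_sum fun k _ => abs_Ffun_phi_le G lam (hpos u hu) k
        _ = K * (|lam| + 1) := by simp [mul_add]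
  have := (convex_Ici (0 : ℝ)).norm_image_sub_le_of_norm_hasDerivWithin_le hmass hbound
    self_mem_Ici hs
  rw [Real.norm_eq_abs, Real.norm_eq_abs, sub_zero, abs_of_nonneg hs] at this
  linarith [(abs_le.1 this).2]

end

/-- If `z : [0,∞) → ℝ^K` stays in the open positive orthant and solves `z' = F(φ(z))`,
then there is an increasing continuous bijection `ν` of `[0,∞)` with
`ν'(t) = ∑_j z_j(ν(t))` such that `w(t) = z(ν(t))/∑_j z_j(ν(t))` solves
`w' = F(φ(w)) − (∑_k F_k(φ(w))) w`. -/
theorem stmt16 {K : ℕ} (G : SimpleGraph (Fin K)) [DecidableRel G.Adj]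
    (hconn : G.Connected) (lam : ℝ)
    (z : ℝ → Fin K → ℝ)
    (hpos : ∀ t : ℝ, 0 ≤ t → ∀ i, 0 < z t i)
    (hderiv : ∀ t : ℝ, 0 ≤ t →
      HasDerivWithinAt z (Ffun G lam (phi G (z t))) (Set.Ici 0) t) :
    ∃ ν : ℝ → ℝ,
      Set.BijOn ν (Set.Ici 0) (Set.Ici 0) ∧
      StrictMonoOn ν (Set.Ici 0) ∧
      ContinuousOn ν (Set.Ici 0) ∧
      (∀ t : ℝ, 0 ≤ t → HasDerivWithinAt ν (∑ j, z (ν t) j) (Set.Ici 0) t) ∧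
      (∀ t : ℝ, 0 ≤ t → ∀ w : Fin K → ℝ, w = (∑ j, z (ν t) j)⁻¹ • z (ν t) →
        HasDerivWithinAt (fun s => (∑ j, z (ν s) j)⁻¹ • z (ν s))
          (Ffun G lam (phi G w) - (∑ k, Ffun G lam (phi G w) k) • w)
          (Set.Ici 0) t) := by
  have hne : (Finset.univ : Finset (Fin K)).Nonempty := @Finset.univ_nonempty _ _ hconn.nonempty
  -- `z` is only given on `[0, ∞)`; `S` is extended to the left as a constant.
  set S : ℝ → ℝ := fun s => ∑ j, z (max s 0) j with hS
  have hS_cont : Continuous S := continuous_finsetSum _ fun j _ => continuous_apply j |>.comp <|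
    ContinuousOn.comp_continuous (fun t ht => (hderiv t ht).continuousWithinAt)
      (continuous_id.max continuous_const) fun s => le_max_right s 0
  have hS_pos : ∀ s, 0 < S s := fun s => Finset.sum_pos (fun j _ => hpos _ (le_max_right s 0) j) hne
  have hS_le : ∀ s, S s ≤ (S 0 + K * (|lam| + 1)) * (1 + |s|) := fun s => by
    have hgrowth : S s ≤ S 0 + K * (|lam| + 1) * max s 0 := by
      simpa [hS] using sum_le_sum_zero_add_mul G hpos hderiv (le_max_right s 0)
    have hmax : max s 0 ≤ |s| := max_le (le_abs_self s) (abs_nonneg s)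
    have hC : (0 : ℝ) ≤ K * (|lam| + 1) := by positivity
    nlinarith [mul_nonneg (hS_pos 0).le (abs_nonneg s), mul_le_mul_of_nonneg_left hmax hC]
  obtain ⟨ν, hν0, hνderiv⟩ := exists_orderIso_hasDerivAt hS_cont hS_pos hS_le
  have hν_nonneg : MapsTo ν (Ici 0) (Ici 0) := fun t ht => hν0 ▸ ν.monotone ht
  have hνderiv' : ∀ t, 0 ≤ t → HasDerivWithinAt ν (∑ j, z (ν t) j) (Ici 0) t := fun t ht => by
    simpa [hS, max_eq_left (mem_Ici.1 (hν_nonneg ht))] using (hνderiv t).hasDerivWithinAt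
  refine ⟨ν, ?_, ν.strictMono.strictMonoOn _, ν.continuous.continuousOn, hνderiv', ?_⟩
  · simpa [ν.image_Ici, hν0] using ν.injective.injOn.bijOn_image (s := Ici 0)
  · rintro t ht w rfl
    have hsum : ∑ j, z (ν t) j ≠ 0 := (Finset.sum_pos (fun j _ => hpos _ (hν_nonneg ht) j) hne).ne'
    rw [phi_smul G (inv_ne_zero hsum)]
    exact hasDerivWithinAt_inv_sum_smul_comp (hderiv _ (hν_nonneg ht)) (hνderiv' t ht)
      hν_nonneg hsum
end
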